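/- Let A₁, …, A_N be entrywise nonnegative real n×n matrices and W₁, …, W_N real m×m matrices satisfying ∑_{i=1}^N ‖A_i‖₁ ‖W_i‖_∞ ≤ κ for some κ ∈ [0, 1). Then ‖∑_{i=1}^N A_iᵀ ⊗ W_i‖_∞ ≤ κ and the spectral radius of ∑_{i=1}^N |A_iᵀ ⊗ W_i| is at most κ < 1; consequently, for every componentwise non-expansive φ : ℝ → ℝ and all real m×n matrices B₁, …, B_N, the equation X = φ(∑_{i=1}^N (W_i X A_i + B_i)) has exactly one solution. -/

import Mathlib

open Matrix Kronecker

/-- The spectral radius of a real square matrix: the supremum of the moduli of its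
complex eigenvalues (elements of the spectrum of the matrix viewed over `ℂ`). -/
noncomputable def specRad {ι : Type*} [Fintype ι] [DecidableEq ι]
    (M : Matrix ι ι ℝ) : ENNReal :=
  spectralRadius ℂ (M.map Complex.ofReal)

/-- The maximum absolute row-sum norm of a real matrix:
the supremum over rows `i` of `∑ j, |M i j|`. -/
noncomputable def rowSumNorm {ι κ : Type*} [Fintype ι] [Fintype κ]
    (M : Matrix ι κ ℝ) : ℝ :=
  ⨆ i, ∑ j, |M i j|

/-- The maximum absolute column-sum norm of a real matrix:
the supremum over columns `j` of `∑ i, |M i j|`. -/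
noncomputable def colSumNorm {ι κ : Type*} [Fintype ι] [Fintype κ]
    (M : Matrix ι κ ℝ) : ℝ :=
  ⨆ j, ∑ i, |M i j|

/-!
Stacking the columns of `X` turns `X ↦ ∑ᵢ Wᵢ X Aᵢ` into multiplication by
`K = ∑ᵢ Aᵢᵀ ⊗ Wᵢ`. A row of `|Aᵢᵀ ⊗ Wᵢ|` sums to a column sum of `|Aᵢ|` times a row sum of
`|Wᵢ|`, so every row sum of `∑ᵢ |Aᵢᵀ ⊗ Wᵢ|`, and hence of `K`, is at most `κ`. The spectral
radius is dominated by the `ℓ∞` operator norm, i.e. the maximal row sum. Since `φ` is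
`1`-Lipschitz for the sup norm, `v ↦ φ (K v + b)` is a `κ`-contraction of `ℝ^(n × m)` and Banach's
fixed-point theorem gives the unique solution.
-/

theorem sum_abs_kronecker_apply {l p l' p' : Type*} [Fintype p] [Fintype p'] (A : Matrix l p ℝ)
    (B : Matrix l' p' ℝ) (i : l) (i' : l') :
    ∑ j, |(A ⊗ₖ B) (i, i') j| = (∑ j, |A i j|) * ∑ j', |B i' j'| := by
  simp only [Fintype.sum_prod_type, kroneckerMap_apply, abs_mul, Finset.sum_mul_sum]

section RowColSums

variable {l p : Type*} [Fintype l] [Fintype p]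

theorem rowSumNorm_nonneg (M : Matrix l p ℝ) : 0 ≤ rowSumNorm M :=
  Real.iSup_nonneg fun _ => Finset.sum_nonneg fun _ _ => abs_nonneg _

theorem colSumNorm_nonneg (M : Matrix l p ℝ) : 0 ≤ colSumNorm M :=
  Real.iSup_nonneg fun _ => Finset.sum_nonneg fun _ _ => abs_nonneg _

theorem sum_abs_le_rowSumNorm (M : Matrix l p ℝ) (i : l) : ∑ j, |M i j| ≤ rowSumNorm M :=
  le_ciSup (f := fun i => ∑ j, |M i j|) (Set.finite_range _).bddAbove i

theorem sum_abs_le_colSumNorm (M : Matrix l p ℝ) (j : p) : ∑ i, |M i j| ≤ colSumNorm M :=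
  le_ciSup (f := fun j => ∑ i, |M i j|) (Set.finite_range _).bddAbove j

theorem rowSumNorm_mono_abs {M M' : Matrix l p ℝ} (h : ∀ i j, |M i j| ≤ |M' i j|) :
    rowSumNorm M ≤ rowSumNorm M' :=
  ciSup_mono (Set.finite_range _).bddAbove fun i => Finset.sum_le_sum fun j _ => h i j

theorem rowSumNorm_sum_le_rowSumNorm_sum_map_abs {ι : Type*} (s : Finset ι)
    (M : ι → Matrix l p ℝ) :
    rowSumNorm (∑ k ∈ s, M k) ≤ rowSumNorm (∑ k ∈ s, (M k).map abs) :=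
  rowSumNorm_mono_abs fun i j => by
    simp only [Matrix.sum_apply, Matrix.map_apply]
    exact (Finset.abs_sum_le_sum_abs _ _).trans (le_abs_self _)

theorem rowSumNorm_sum_map_abs_kronecker_le {ι : Type*} [Fintype ι]
    (A : ι → Matrix p p ℝ) (W : ι → Matrix l l ℝ) :
    rowSumNorm (∑ i, ((A i)ᵀ ⊗ₖ W i).map abs) ≤ ∑ i, colSumNorm (A i) * rowSumNorm (W i) := by
  refine Real.iSup_le (fun ⟨j, q⟩ => ?_) <|
    Finset.sum_nonneg fun i _ => mul_nonneg (colSumNorm_nonneg _) (rowSumNorm_nonneg _)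
  calc ∑ y, |(∑ i, ((A i)ᵀ ⊗ₖ W i).map abs) (j, q) y|
      = ∑ i, ∑ y, |((A i)ᵀ ⊗ₖ W i) (j, q) y| := by
        simp only [Matrix.sum_apply, Matrix.map_apply]
        rw [Finset.sum_comm]
        exact Finset.sum_congr rfl fun y _ =>
          abs_of_nonneg (Finset.sum_nonneg fun _ _ => abs_nonneg _)
    _ = ∑ i, (∑ k, |A i k j|) * ∑ r, |W i q r| := by
        simp only [sum_abs_kronecker_apply, transpose_apply]
    _ ≤ ∑ i, colSumNorm (A i) * rowSumNorm (W i) :=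
        Finset.sum_le_sum fun i _ => mul_le_mul (sum_abs_le_colSumNorm _ _)
          (sum_abs_le_rowSumNorm _ _) (Finset.sum_nonneg fun _ _ => abs_nonneg _)
          (colSumNorm_nonneg _)

end RowColSums

theorem vec_sum_mul_mul_add {ι l p : Type*} [Fintype ι] [Fintype l] [Fintype p]
    (A : ι → Matrix p p ℝ) (W : ι → Matrix l l ℝ) (B : ι → Matrix l p ℝ) (X : Matrix l p ℝ) :
    vec (∑ i, (W i * X * A i + B i)) = (∑ i, (A i)ᵀ ⊗ₖ W i) *ᵥ vec X + vec (∑ i, B i) := by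
  simp only [Finset.sum_add_distrib, vec_add, vec_sum, sum_mulVec, kronecker_mulVec_vec,
    transpose_transpose]

section LinftyOpNorm

attribute [local instance] Matrix.linftyOpNormedAddCommGroup Matrix.linftyOpNormedRing
  Matrix.linftyOpNormedAlgebra

variable {l p : Type*} [Fintype l] [Fintype p]

theorem linfty_opNorm_eq_rowSumNorm (M : Matrix l p ℝ) : ‖M‖ = rowSumNorm M := by
  simp [linfty_opNorm_def, Finset.sup_univ_eq_ciSup, NNReal.coe_iSup, rowSumNorm]

theorem linfty_opNorm_map_ofReal (M : Matrix l p ℝ) : ‖M.map Complex.ofReal‖ = ‖M‖ := by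
  simp [linfty_opNorm_def]

theorem specRad_le_rowSumNorm [DecidableEq l] (M : Matrix l l ℝ) :
    specRad M ≤ ENNReal.ofReal (rowSumNorm M) := by
  -- `spectralRadius_le_nnnorm` needs `‖1‖ = 1`, which fails over an empty index type.
  rcases isEmpty_or_nonempty l with hl | hl
  · simp [specRad]
  · calc specRad M ≤ ‖M.map Complex.ofReal‖₊ := spectrum.spectralRadius_le_nnnorm _
      _ = ENNReal.ofReal (rowSumNorm M) := by
        rw [← linfty_opNorm_eq_rowSumNorm, ← linfty_opNorm_map_ofReal, ofReal_norm]
        rfl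

theorem existsUnique_eq_comp_mulVec_add (K : Matrix l l ℝ) (hK : ‖K‖ < 1) {φ : ℝ → ℝ}
    (hφ : ∀ a b, |φ a - φ b| ≤ |a - b|) (c : l → ℝ) : ∃! v, v = φ ∘ (K *ᵥ v + c) := by
  have hlip : LipschitzWith ‖K‖₊ fun v => φ ∘ (K *ᵥ v + c) := by
    refine LipschitzWith.of_dist_le_mul fun v w => (dist_pi_le_iff (by positivity)).2 fun x => ?_
    calc dist (φ ((K *ᵥ v + c) x)) (φ ((K *ᵥ w + c) x))
        ≤ ‖(K *ᵥ (v - w)) x‖ := by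
          simpa [Real.dist_eq, mulVec_sub] using hφ ((K *ᵥ v + c) x) ((K *ᵥ w + c) x)
      _ ≤ ‖K *ᵥ (v - w)‖ := norm_le_pi_norm _ x
      _ ≤ ‖K‖ * ‖v - w‖ := linfty_opNorm_mulVec _ _
      _ = ‖K‖₊ * dist v w := by rw [dist_eq_norm]; rfl
  have hf : ContractingWith ‖K‖₊ fun v => φ ∘ (K *ᵥ v + c) := ⟨by exact_mod_cast hK, hlip⟩
  exact ⟨_, hf.fixedPoint_isFixedPt.symm, fun v hv => hf.fixedPoint_unique hv.symm⟩

theorem existsUnique_eq_map_sum_mul_mul_add {ι : Type*} [Fintype ι]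
    (A : ι → Matrix p p ℝ) (W : ι → Matrix l l ℝ) (B : ι → Matrix l p ℝ)
    (hAW : rowSumNorm (∑ i, (A i)ᵀ ⊗ₖ W i) < 1) {φ : ℝ → ℝ}
    (hφ : ∀ a b, |φ a - φ b| ≤ |a - b|) :
    ∃! X : Matrix l p ℝ, X = (∑ i, (W i * X * A i + B i)).map φ := by
  refine ((Equiv.ofBijective vec vec_bijective).existsUnique_congr fun X => ?_).2
    (existsUnique_eq_comp_mulVec_add _ (by rwa [linfty_opNorm_eq_rowSumNorm]) hφ
      (vec (∑ i, B i)))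
  rw [Equiv.ofBijective_apply, ← vec_sum_mul_mul_add, ← vec_map, vec_inj]

end LinftyOpNorm

theorem stmt_13_general {m n N : ℕ}
    (A : Fin N → Matrix (Fin n) (Fin n) ℝ)
    (W : Fin N → Matrix (Fin m) (Fin m) ℝ)
    (κ : ℝ) (hκ1 : κ < 1)
    (h : ∑ i, colSumNorm (A i) * rowSumNorm (W i) ≤ κ) :
    rowSumNorm (∑ i, (A i)ᵀ ⊗ₖ W i) ≤ κ ∧
    specRad (∑ i, ((A i)ᵀ ⊗ₖ W i).map fun a => |a|) ≤ ENNReal.ofReal κ ∧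
    ∀ φ : ℝ → ℝ, (∀ a b : ℝ, |φ a - φ b| ≤ |a - b|) →
      ∀ B : Fin N → Matrix (Fin m) (Fin n) ℝ,
        ∃! X : Matrix (Fin m) (Fin n) ℝ, X = (∑ i, (W i * X * A i + B i)).map φ := by
  have habs : rowSumNorm (∑ i, ((A i)ᵀ ⊗ₖ W i).map abs) ≤ κ :=
    (rowSumNorm_sum_map_abs_kronecker_le A W).trans h
  have hK : rowSumNorm (∑ i, (A i)ᵀ ⊗ₖ W i) ≤ κ :=
    (rowSumNorm_sum_le_rowSumNorm_sum_map_abs _ _).trans habs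
  exact ⟨hK, (specRad_le_rowSumNorm _).trans (ENNReal.ofReal_le_ofReal habs),
    fun φ hφ B => existsUnique_eq_map_sum_mul_mul_add A W B (hK.trans_lt hκ1) hφ⟩

theorem stmt_13 {m n N : ℕ}
    (A : Fin N → Matrix (Fin n) (Fin n) ℝ) (hA : ∀ i, ∀ j k, 0 ≤ A i j k)
    (W : Fin N → Matrix (Fin m) (Fin m) ℝ)
    (κ : ℝ) (hκ0 : 0 ≤ κ) (hκ1 : κ < 1)
    (h : ∑ i, colSumNorm (A i) * rowSumNorm (W i) ≤ κ) :
    rowSumNorm (∑ i, (A i)ᵀ ⊗ₖ W i) ≤ κ ∧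
    specRad (∑ i, ((A i)ᵀ ⊗ₖ W i).map fun a => |a|) ≤ ENNReal.ofReal κ ∧
    ∀ φ : ℝ → ℝ, (∀ a b : ℝ, |φ a - φ b| ≤ |a - b|) →
      ∀ B : Fin N → Matrix (Fin m) (Fin n) ℝ,
        ∃! X : Matrix (Fin m) (Fin n) ℝ, X = (∑ i, (W i * X * A i + B i)).map φ :=
  stmt_13_general A W κ hκ1 h
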